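/- arXiv:1503.06259 — 6 statements merged into one kernel-verified Lean document; each statement's English description precedes it below -/
import Mathlib

section
/- A Hurwitz quaternion is irreducible (prime) in the ring of Hurwitz quaternions if and only if its norm is a prime number in the integers. -/
/-!
The norm `N` is multiplicative, takes values in `ℕ` on Hurwitz quaternions and equals `1` exactly on
units, so a Hurwitz quaternion of prime norm is irreducible. Conversely, every rational quaternion
lies at norm distance `< 1` from a Hurwitz quaternion, so the Hurwitz order has a left division
algorithm and the right ideal generated by an irreducible `P` and a prime `p ∣ N(P)` is principal.
Its generator is either a unit, and then `conj P · P = N(P) ∈ pℤ` shows `p ∣ P`, or associated to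
`P`; either way `P ∣ p`, hence `N(P) ∣ p²`. Since every natural number is a sum of four squares,
`p = w · conj w` is not irreducible, which excludes `N(P) = p²`.
-/

open Quaternion

/-- The ring of Hurwitz quaternions, `ℤ[i, j, (1+i+j+k)/2]`, as a subring of
the rational quaternions. -/
noncomputable def HurwitzQuaternions : Subring ℍ[ℚ] :=
  Subring.closure ({⟨0,1,0,0⟩, ⟨0,0,1,0⟩, ⟨1/2,1/2,1/2,1/2⟩} : Set ℍ[ℚ])

theorem exists_mul_add_mul_dvd_and_dvd {R : Type*} [Ring R] (ν : R → ℕ)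
    (hν : ∀ a b : R, b ≠ 0 → ∃ q, ν (a - b * q) < ν b) {a : R} (ha : a ≠ 0) (b : R) :
    ∃ x y : R, a * x + b * y ∣ a ∧ a * x + b * y ∣ b := by
  classical
  have hex : ∃ n, ∃ x y : R, a * x + b * y ≠ 0 ∧ ν (a * x + b * y) = n :=
    ⟨_, 1, 0, by simpa using ha, rfl⟩
  obtain ⟨x, y, hd, hdn⟩ := Nat.find_spec hex
  have hdvd : ∀ x' y' : R, a * x + b * y ∣ a * x' + b * y' := by
    intro x' y'
    obtain ⟨q, hq⟩ := hν (a * x' + b * y') _ hd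
    have hrem : a * x' + b * y' - (a * x + b * y) * q = a * (x' - x * q) + b * (y' - y * q) := by
      noncomm_ring
    by_contra hndvd
    have hne : a * (x' - x * q) + b * (y' - y * q) ≠ 0 := by
      rw [← hrem, sub_ne_zero]
      exact fun h => hndvd ⟨q, h⟩
    rw [hrem, hdn] at hq
    exact (Nat.find_min' hex ⟨_, _, hne, rfl⟩).not_gt hq
  exact ⟨x, y, by simpa using hdvd 1 0, by simpa using hdvd 0 1⟩

namespace HurwitzQuaternions

/-- `ℤω + ℤi + ℤj + ℤk` with `ω = (1 + i + j + k) / 2`, in coordinates. -/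
def lattice : Subring ℍ[ℚ] where
  carrier := {x | ∃ a p q r : ℤ,
    x.re = a / 2 ∧ x.imI = a / 2 + p ∧ x.imJ = a / 2 + q ∧ x.imK = a / 2 + r}
  zero_mem' := ⟨0, 0, 0, 0, by simp⟩
  one_mem' := ⟨2, -1, -1, -1, by norm_num⟩
  add_mem' := by
    rintro x y ⟨a, p, q, r, hx⟩ ⟨b, s, t, u, hy⟩
    refine ⟨a + b, p + s, q + t, r + u, ?_⟩
    simp only [re_add, imI_add, imJ_add, imK_add, hx, hy]
    push_cast
    refine ⟨?_, ?_, ?_, ?_⟩ <;> ring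
  neg_mem' := by
    rintro x ⟨a, p, q, r, hx⟩
    refine ⟨-a, -p, -q, -r, ?_⟩
    simp only [re_neg, imI_neg, imJ_neg, imK_neg, hx]
    push_cast
    refine ⟨?_, ?_, ?_, ?_⟩ <;> ring
  mul_mem' := by
    rintro x y ⟨a, p, q, r, hx⟩ ⟨b, s, t, u, hy⟩
    refine ⟨-(a*b) - a*s - a*t - a*u - b*p - b*q - b*r - 2*p*s - 2*q*t - 2*r*u,
      a*b + a*s + a*u + b*p + b*q + p*s + q*t + q*u - r*t + r*u,
      a*b + a*s + a*t + b*q + b*r + p*s - p*u + q*t + r*s + r*u,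
      a*b + a*t + a*u + b*p + b*r + p*s + p*t - q*s + q*t + r*u, ?_⟩
    simp only [re_mul, imI_mul, imJ_mul, imK_mul, hx, hy]
    push_cast
    refine ⟨?_, ?_, ?_, ?_⟩ <;> ring

theorem eq_lattice : HurwitzQuaternions = lattice := by
  refine le_antisymm (Subring.closure_le.2 ?_) ?_
  · rintro x (rfl | rfl | rfl)
    · exact ⟨0, 1, 0, 0, by norm_num⟩
    · exact ⟨0, 0, 1, 0, by norm_num⟩
    · exact ⟨1, 0, 0, 0, by norm_num⟩
  set i : ℍ[ℚ] := ⟨0, 1, 0, 0⟩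
  set j : ℍ[ℚ] := ⟨0, 0, 1, 0⟩
  set k : ℍ[ℚ] := ⟨0, 0, 0, 1⟩
  set ω : ℍ[ℚ] := ⟨1/2, 1/2, 1/2, 1/2⟩
  have hi : i ∈ HurwitzQuaternions := Subring.subset_closure (Set.mem_insert _ _)
  have hj : j ∈ HurwitzQuaternions :=
    Subring.subset_closure (Set.mem_insert_of_mem _ (Set.mem_insert _ _))
  have hω : ω ∈ HurwitzQuaternions :=
    Subring.subset_closure (Set.mem_insert_of_mem _ (Set.mem_insert_of_mem _ rfl))
  have hk : k ∈ HurwitzQuaternions := by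
    have hij : k = i * j := by
      ext <;> simp only [re_mul, imI_mul, imJ_mul, imK_mul] <;> simp [i, j, k]
    exact hij ▸ mul_mem hi hj
  rintro x ⟨a, p, q, r, h1, h2, h3, h4⟩
  have hx : x = a * ω + p * i + q * j + r * k := by
    ext <;> simp [re_mul, imI_mul, imJ_mul, imK_mul, h1, h2, h3, h4] <;> simp [i, j, k, ω] <;> ring
  rw [hx]
  exact add_mem (add_mem (add_mem (mul_mem (intCast_mem _ a) hω) (mul_mem (intCast_mem _ p) hi))
    (mul_mem (intCast_mem _ q) hj)) (mul_mem (intCast_mem _ r) hk)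

theorem mem_iff {x : ℍ[ℚ]} : x ∈ HurwitzQuaternions ↔ ∃ a p q r : ℤ,
    x.re = a / 2 ∧ x.imI = a / 2 + p ∧ x.imJ = a / 2 + q ∧ x.imK = a / 2 + r := by
  rw [eq_lattice]
  rfl

theorem star_mem {x : ℍ[ℚ]} (hx : x ∈ HurwitzQuaternions) : star x ∈ HurwitzQuaternions := by
  obtain ⟨a, p, q, r, h1, h2, h3, h4⟩ := mem_iff.1 hx
  refine mem_iff.2 ⟨a, -a - p, -a - q, -a - r, ?_⟩
  simp only [re_star, imI_star, imJ_star, imK_star, h1, h2, h3, h4]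
  push_cast
  refine ⟨trivial, ?_, ?_, ?_⟩ <;> ring

theorem exists_natCast_eq_normSq {x : ℍ[ℚ]} (hx : x ∈ HurwitzQuaternions) :
    ∃ n : ℕ, (n : ℚ) = normSq x := by
  obtain ⟨a, p, q, r, h1, h2, h3, h4⟩ := mem_iff.1 hx
  obtain ⟨m, hm⟩ : ∃ m : ℤ, (m : ℚ) = normSq x :=
    ⟨a * a + a * p + a * q + a * r + p * p + q * q + r * r, by
      rw [normSq_def', h1, h2, h3, h4]; push_cast; ring⟩
  lift m to ℕ using by exact_mod_cast hm ▸ normSq_nonneg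
  exact ⟨m, mod_cast hm⟩

noncomputable def normNat : HurwitzQuaternions →*₀ ℕ where
  toFun x := ⌊normSq (x : ℍ[ℚ])⌋₊
  map_zero' := by simp
  map_one' := by simp
  map_mul' x y := by
    obtain ⟨m, hm⟩ := exists_natCast_eq_normSq x.2
    obtain ⟨n, hn⟩ := exists_natCast_eq_normSq y.2
    simp only [Subring.coe_mul, map_mul, ← hm, ← hn, ← Nat.cast_mul, Nat.floor_natCast]

@[simp, norm_cast]
theorem natCast_normNat (x : HurwitzQuaternions) : (normNat x : ℚ) = normSq (x : ℍ[ℚ]) := by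
  obtain ⟨n, hn⟩ := exists_natCast_eq_normSq x.2
  simp [normNat, ← hn]

theorem normNat_natCast (n : ℕ) : normNat n = n ^ 2 := by
  have h : (normNat n : ℚ) = (n : ℚ) ^ 2 := by
    rw [natCast_normNat, ← normSq_natCast]
    push_cast
    rfl
  exact_mod_cast h

theorem isUnit_of_normNat_eq_one {x : HurwitzQuaternions} (hx : normNat x = 1) : IsUnit x := by
  have hx' : normSq (x : ℍ[ℚ]) = 1 := by rw [← natCast_normNat, hx, Nat.cast_one]
  refine ⟨⟨x, ⟨star x, star_mem x.2⟩, Subtype.ext ?_, Subtype.ext ?_⟩, rfl⟩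
  · simp [self_mul_star, hx']
  · simp [star_mul_self, hx']

instance : IsLocalHom normNat :=
  ⟨fun _ hx => isUnit_of_normNat_eq_one (Nat.isUnit_iff.1 hx)⟩

/- Rounding `2 * x.re` first puts the real part within `1/4`, so the norm is at most
`1/16 + 3/4`. -/
theorem exists_normSq_sub_lt_one (x : ℍ[ℚ]) : ∃ h ∈ HurwitzQuaternions, normSq (x - h) < 1 := by
  set a := round (2 * x.re)
  set p := round (x.imI - a / 2)
  set q := round (x.imJ - a / 2)
  set r := round (x.imK - a / 2)
  obtain ⟨h, h_re, h_imI, h_imJ, h_imK⟩ : ∃ h : ℍ[ℚ],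
      h.re = a / 2 ∧ h.imI = a / 2 + p ∧ h.imJ = a / 2 + q ∧ h.imK = a / 2 + r :=
    ⟨⟨_, _, _, _⟩, rfl, rfl, rfl, rfl⟩
  refine ⟨h, mem_iff.2 ⟨a, p, q, r, h_re, h_imI, h_imJ, h_imK⟩, ?_⟩
  have sq_le_of_abs_le {t c : ℚ} (h : |t| ≤ c) : t ^ 2 ≤ c ^ 2 :=
    sq_le_sq' (abs_le.1 h).1 (abs_le.1 h).2
  have h0 : (x.re - a / 2) ^ 2 ≤ (1 / 4) ^ 2 := sq_le_of_abs_le <| by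
    have := abs_sub_round (2 * x.re)
    rw [show x.re - a / 2 = (2 * x.re - a) / 2 by ring, abs_div, abs_two]
    linarith
  have h1 := sq_le_of_abs_le (abs_sub_round (x.imI - a / 2))
  have h2 := sq_le_of_abs_le (abs_sub_round (x.imJ - a / 2))
  have h3 := sq_le_of_abs_le (abs_sub_round (x.imK - a / 2))
  rw [normSq_def', re_sub, imI_sub, imJ_sub, imK_sub, h_re, h_imI, h_imJ, h_imK]
  simp only [← sub_sub]
  linarith

theorem exists_normNat_sub_mul_lt (a : HurwitzQuaternions) {b : HurwitzQuaternions} (hb : b ≠ 0) :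
    ∃ q, normNat (a - b * q) < normNat b := by
  have hb' : (b : ℍ[ℚ]) ≠ 0 := by exact_mod_cast hb
  obtain ⟨h, hmem, hlt⟩ := exists_normSq_sub_lt_one ((b : ℍ[ℚ])⁻¹ * (a : ℍ[ℚ]))
  refine ⟨⟨h, hmem⟩, ?_⟩
  have hrem : ((a - b * ⟨h, hmem⟩ : HurwitzQuaternions) : ℍ[ℚ]) =
      b * ((b : ℍ[ℚ])⁻¹ * (a : ℍ[ℚ]) - h) := by
    rw [mul_sub, mul_inv_cancel_left₀ hb']
    rfl
  suffices normSq (b : ℍ[ℚ]) * normSq ((b : ℍ[ℚ])⁻¹ * (a : ℍ[ℚ]) - h) < normSq (b : ℍ[ℚ]) by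
    rw [← map_mul, ← hrem, ← natCast_normNat, ← natCast_normNat] at this
    exact_mod_cast this
  exact mul_lt_of_lt_one_right (normSq_nonneg.lt_of_ne' (normSq_ne_zero.2 hb')) hlt

theorem associated_of_dvd_of_normNat_eq {a b : HurwitzQuaternions} (h : a ∣ b)
    (hab : normNat a = normNat b) (ha : normNat a ≠ 0) : Associated a b := by
  obtain ⟨c, rfl⟩ := h
  rw [map_mul, eq_comm, Nat.mul_eq_left ha] at hab
  exact associated_mul_unit_right a c (isUnit_of_normNat_eq_one hab)

theorem exists_normSq_eq_natCast (n : ℕ) : ∃ w ∈ HurwitzQuaternions, normSq w = n := by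
  obtain ⟨a, b, c, d, habcd⟩ := Nat.sum_four_squares n
  obtain ⟨w, h_re, h_imI, h_imJ, h_imK⟩ :
      ∃ w : ℍ[ℚ], w.re = a ∧ w.imI = b ∧ w.imJ = c ∧ w.imK = d :=
    ⟨⟨_, _, _, _⟩, rfl, rfl, rfl, rfl⟩
  refine ⟨w, mem_iff.2 ⟨2 * a, b - a, c - a, d - a, ?_⟩, ?_⟩
  · rw [h_re, h_imI, h_imJ, h_imK]
    push_cast
    refine ⟨?_, ?_, ?_, ?_⟩ <;> ring
  · rw [normSq_def', h_re, h_imI, h_imJ, h_imK]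
    exact_mod_cast habcd

theorem not_irreducible_natCast (n : ℕ) : ¬Irreducible (n : HurwitzQuaternions) := by
  intro hn
  obtain ⟨w, hw, hnorm⟩ := exists_normSq_eq_natCast n
  have hfac : (n : HurwitzQuaternions) = ⟨w, hw⟩ * ⟨star w, star_mem hw⟩ :=
    Subtype.ext (by simp [self_mul_star, hnorm, coe_natCast])
  have hn1 : n = 1 := by
    rcases hn.isUnit_or_isUnit hfac with hu | hu <;>
    · have hu' := congrArg (Nat.cast : ℕ → ℚ) (Nat.isUnit_iff.1 (hu.map normNat))
      simpa [hnorm] using hu'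
  exact not_irreducible_one (by rwa [hn1, Nat.cast_one] at hn)

theorem natCast_dvd_of_mul_add_natCast_mul_eq_one {P x y : HurwitzQuaternions} {p : ℕ}
    (hpP : p ∣ normNat P) (h : P * x + p * y = 1) : (p : HurwitzQuaternions) ∣ P := by
  obtain ⟨m, hm⟩ := hpP
  have h' : (P : ℍ[ℚ]) * x + p * y = 1 := by exact_mod_cast congrArg Subtype.val h
  have hPP : star (P : ℍ[ℚ]) * P = p * m := by
    rw [star_mul_self, ← natCast_normNat, hm]
    push_cast
    rfl
  have hconj : star (P : ℍ[ℚ]) = p * (m * x + star (P : ℍ[ℚ]) * y) := by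
    calc star (P : ℍ[ℚ]) = star (P : ℍ[ℚ]) * (P * x + p * y) := by rw [h', mul_one]
      _ = (star (P : ℍ[ℚ]) * P) * x + star (P : ℍ[ℚ]) * p * y := by noncomm_ring
      _ = p * (m * x + star (P : ℍ[ℚ]) * y) := by
        rw [hPP, ← (Nat.cast_commute p _).eq]
        noncomm_ring
  set g : ℍ[ℚ] := m * x + star (P : ℍ[ℚ]) * y
  have hg : star g ∈ HurwitzQuaternions :=
    star_mem (add_mem (mul_mem (natCast_mem _ m) x.2) (mul_mem (star_mem P.2) y.2))
  refine ⟨⟨star g, hg⟩, Subtype.ext ?_⟩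
  calc (P : ℍ[ℚ]) = star (p * g) := by rw [← hconj, star_star]
    _ = p * star g := by rw [star_mul, star_natCast, (Nat.cast_commute p _).eq]

theorem dvd_natCast_of_irreducible {P : HurwitzQuaternions} (hP : Irreducible P) {p : ℕ}
    (hp : p ≠ 1) (hpP : p ∣ normNat P) : P ∣ (p : HurwitzQuaternions) := by
  obtain ⟨x, y, hdP, hdp⟩ := exists_mul_add_mul_dvd_and_dvd normNat
    (fun a _ hb => exists_normNat_sub_mul_lt a hb) hP.ne_zero (p : HurwitzQuaternions)
  rcases hP.dvd_iff.1 hdP with hunit | hassoc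
  · obtain ⟨d', hd'⟩ := hunit.exists_right_inv
    have hpdvd : (p : HurwitzQuaternions) ∣ P :=
      natCast_dvd_of_mul_add_natCast_mul_eq_one (x := x * d') (y := y * d') hpP
        (by rw [← hd']; noncomm_ring)
    refine ((hP.dvd_iff.1 hpdvd).resolve_left fun hpu => hp ?_).dvd
    have := Nat.isUnit_iff.1 (hpu.map normNat)
    rwa [normNat_natCast, pow_eq_one_iff_left two_ne_zero] at this
  · exact hassoc.dvd.trans hdp

end HurwitzQuaternions

open HurwitzQuaternions in
/-- A Hurwitz quaternion is irreducible iff its norm is a prime number. -/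
theorem hurwitz_irreducible_iff_norm_prime (P : HurwitzQuaternions) :
    Irreducible P ↔ ∃ q : ℕ, q.Prime ∧ Quaternion.normSq (P : ℍ[ℚ]) = q := by
  simp_rw [← natCast_normNat, Nat.cast_inj, exists_eq_right']
  refine ⟨fun hP => ?_, fun hP => Irreducible.of_map (f := normNat) hP⟩
  have hn : normNat P ≠ 1 := fun h => hP.not_isUnit (isUnit_of_normNat_eq_one h)
  set p := (normNat P).minFac
  have hp : p.Prime := Nat.minFac_prime hn
  have hPp : P ∣ p := dvd_natCast_of_irreducible hP hp.ne_one (Nat.minFac_dvd _)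
  obtain ⟨i, hi, hPi⟩ := (Nat.dvd_prime_pow hp).1 (normNat_natCast p ▸ map_dvd normNat hPp)
  interval_cases i
  · exact absurd hPi hn
  · simpa [hPi] using hp
  · have hassoc : Associated P p := associated_of_dvd_of_normNat_eq hPp
      (by rw [hPi, normNat_natCast]) (by simp [hPi, hp.ne_zero])
    exact (not_irreducible_natCast p (hassoc.irreducible hP)).elim
end

section
/- For an odd prime p, the quotient ring of the Hurwitz quaternions modulo p is isomorphic as an 𝔽_p-algebra to the ring of 2×2 matrices over 𝔽_p. -/
open Quaternion

/-!
Over a field `K` of characteristic `≠ 2` in which `-1 = a ^ 2 + b ^ 2`, the matrices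
`I = !![a, b; b, -a]` and `J = !![0, 1; -1, 0]` satisfy `I ^ 2 = J ^ 2 = -1` and `I J = -J I`, so
they define an algebra map `ℍ[K] → M₂(K)`. It is injective (the trace recovers the real part, the
antisymmetric part recovers the `j`-coordinate, and `a ^ 2 + b ^ 2 = -1` lets one solve for the
other two), hence bijective since both sides have dimension `4`. Over `𝔽_p` every element, in
particular `-1`, is a sum of two squares.
-/

namespace Quaternion

section CommRing

variable {R : Type*} [CommRing R] {a b : R}

@[simps]
def matrixBasis (hab : a ^ 2 + b ^ 2 = -1) :
    QuaternionAlgebra.Basis (Matrix (Fin 2) (Fin 2) R) (-1 : R) 0 (-1) where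
  i := !![a, b; b, -a]
  j := !![0, 1; -1, 0]
  k := !![-b, a; a, b]
  i_mul_i := by
    ext i j
    fin_cases i <;> fin_cases j <;> simp [mul_comm a b] <;> linear_combination hab
  j_mul_j := by ext i j; fin_cases i <;> fin_cases j <;> simp
  i_mul_j := by ext i j; fin_cases i <;> fin_cases j <;> simp
  j_mul_i := by ext i j; fin_cases i <;> fin_cases j <;> simp

theorem matrixBasis_liftHom_apply (hab : a ^ 2 + b ^ 2 = -1) (x : ℍ[R]) :
    (matrixBasis hab).liftHom x =
      !![x.re + a * x.imI - b * x.imK, b * x.imI + x.imJ + a * x.imK;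
        b * x.imI - x.imJ + a * x.imK, x.re - a * x.imI + b * x.imK] := by
  change algebraMap R _ x.re + x.imI • (matrixBasis hab).i + x.imJ • (matrixBasis hab).j +
    x.imK • (matrixBasis hab).k = _
  ext i j
  fin_cases i <;> fin_cases j <;> simp [Matrix.algebraMap_matrix_apply] <;> ring

end CommRing

section Field

variable {K : Type*} [Field K] {a b : K}

theorem matrixBasis_liftHom_injective (h2 : (2 : K) ≠ 0) (hab : a ^ 2 + b ^ 2 = -1) :
    Function.Injective (matrixBasis hab).liftHom := by
  refine (injective_iff_map_eq_zero _).mpr fun (x : ℍ[K]) hx => ?_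
  rw [matrixBasis_liftHom_apply, ← Matrix.ext_iff] at hx
  simp only [Fin.forall_fin_two, Matrix.of_apply, Matrix.cons_val', Matrix.cons_val_zero,
    Matrix.cons_val_one, Matrix.empty_val', Matrix.cons_val_fin_one, Matrix.zero_apply] at hx
  obtain ⟨⟨h00, h01⟩, h10, h11⟩ := hx
  have hre : x.re = 0 :=
    (mul_eq_zero.mp (by linear_combination h00 + h11 : 2 * x.re = 0)).resolve_left h2
  have hJ : x.imJ = 0 :=
    (mul_eq_zero.mp (by linear_combination h01 - h10 : 2 * x.imJ = 0)).resolve_left h2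
  have hI : x.imI = 0 := by
    linear_combination -a * h00 - b * h01 + a * hre + b * hJ + x.imI * hab
  have hK : x.imK = 0 := by
    linear_combination b * h00 - a * h01 - b * hre + a * hJ + x.imK * hab
  exact Quaternion.ext _ _ hre hI hJ hK

noncomputable def matrixAlgEquiv (h2 : (2 : K) ≠ 0) (hab : a ^ 2 + b ^ 2 = -1) :
    ℍ[K] ≃ₐ[K] Matrix (Fin 2) (Fin 2) K :=
  have hinj := matrixBasis_liftHom_injective h2 hab
  have hdim : Module.finrank K ℍ[K] = Module.finrank K (Matrix (Fin 2) (Fin 2) K) := by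
    rw [Quaternion.finrank_eq_four, Module.finrank_matrix]
    simp
  AlgEquiv.ofBijective (matrixBasis hab).liftHom
    ⟨hinj, (LinearMap.injective_iff_surjective_of_finrank_eq_finrank
      (f := (matrixBasis hab).liftHom.toLinearMap) hdim).mp hinj⟩

end Field

end Quaternion

/-- For an odd prime `p`, the quotient of the Hurwitz quaternions mod `p`,
i.e. the quaternion algebra over `𝔽_p`, is isomorphic as an `𝔽_p`-algebra to
`M₂(𝔽_p)`. -/
theorem quaternion_quotient_iso_matrix (p : ℕ) [Fact p.Prime] (hp : Odd p) :
    Nonempty (ℍ[ZMod p] ≃ₐ[ZMod p] Matrix (Fin 2) (Fin 2) (ZMod p)) := by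
  have h2 : (2 : ZMod p) ≠ 0 :=
    Ring.two_ne_zero ((ZMod.ringChar_zmod_n p).symm ▸ hp.ne_two_of_dvd_nat dvd_rfl)
  obtain ⟨a, b, hab⟩ := ZMod.sq_add_sq p (-1)
  exact ⟨matrixAlgEquiv h2 hab⟩
end

section
/- The conjugation action of GL₂(𝔽_p) on the set of nonzero rank-one trace-zero 2×2 matrices modulo scalars is equivariantly isomorphic to the right action of GL₂(𝔽_p) on the projective line ℙ¹(𝔽_p) by row-vector multiplication, via the map sending the line spanned by a row vector v to the class of the matrix vᵀ·(v·J) where the correspondence sends ⟨x,y⟩ to the class of [[xy, y²], [−x², −xy]]. -/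
open Matrix Projectivization

/-- The matrix `[[xy, y²],[−x², −xy]]` associated to a row vector `⟨x, y⟩`. -/
def assocMatrix {p : ℕ} (v : Fin 2 → ZMod p) : Matrix (Fin 2) (Fin 2) (ZMod p) :=
  !![v 0 * v 1, (v 1) ^ 2; -(v 0) ^ 2, -(v 0 * v 1)]

/-!
The matrix `assocMatrix v` is the rank-one matrix `(perp v)ᵀ v` with `perp ⟨x, y⟩ = ⟨y, -x⟩`.
It is quadratic in `v`, so `v ↦ [assocMatrix v]` descends to `ℙ¹`. Its rows are multiples of
`v`, which recovers the line `[v]` from `[assocMatrix v]`. Conversely, for `M` with trace and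
determinant zero, `assocMatrix` of any row of `M` is a multiple of `M`, which gives surjectivity.
Equivariance is the identity `perp (v A) = adj(A) (perp v)` together with `adj(A) = det(A) A⁻¹`.
-/

lemma Matrix.adjugate_eq_det_smul_inv {n R : Type*} [Fintype n] [DecidableEq n] [CommRing R]
    (A : Matrix n n R) (h : IsUnit A.det) : A.adjugate = A.det • A⁻¹ := by
  rw [inv_def, smul_smul, Ring.mul_inverse_cancel _ h, one_smul]

section Perp

variable {R : Type*}

def perp [Neg R] (v : Fin 2 → R) : Fin 2 → R := ![v 1, -v 0]

lemma perp_ne_zero [Ring R] {v : Fin 2 → R} (hv : v ≠ 0) : perp v ≠ 0 := by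
  intro h
  apply hv
  ext i
  fin_cases i
  · simpa [perp] using congrFun h 1
  · simpa [perp] using congrFun h 0

lemma perp_vecMul [CommRing R] (v : Fin 2 → R) (A : Matrix (Fin 2) (Fin 2) R) :
    perp (v ᵥ* A) = A.adjugate *ᵥ perp v := by
  ext i
  fin_cases i <;> simp [perp, adjugate_fin_two, vecMul, mulVec, dotProduct] <;> ring

end Perp

section CommRing

variable {p : ℕ}

lemma assocMatrix_eq_vecMulVec (v : Fin 2 → ZMod p) : assocMatrix v = vecMulVec (perp v) v := by
  ext i j
  fin_cases i <;> fin_cases j <;> simp [assocMatrix, perp, vecMulVec_apply] <;> ring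

lemma assocMatrix_smul (c : ZMod p) (v : Fin 2 → ZMod p) :
    assocMatrix (c • v) = c ^ 2 • assocMatrix v := by
  ext i j
  fin_cases i <;> fin_cases j <;> simp [assocMatrix] <;> ring

lemma trace_assocMatrix (v : Fin 2 → ZMod p) : (assocMatrix v).trace = 0 := by
  simp [assocMatrix, trace_fin_two]

lemma det_assocMatrix (v : Fin 2 → ZMod p) : (assocMatrix v).det = 0 := by
  simp [assocMatrix, det_fin_two_of]
  ring

lemma assocMatrix_vecMul (v : Fin 2 → ZMod p) (A : Matrix (Fin 2) (Fin 2) (ZMod p)) :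
    assocMatrix (v ᵥ* A) = A.adjugate * assocMatrix v * A := by
  rw [assocMatrix_eq_vecMulVec, assocMatrix_eq_vecMulVec, mul_vecMulVec, vecMulVec_mul,
    perp_vecMul]

lemma assocMatrix_row_zero {M : Matrix (Fin 2) (Fin 2) (ZMod p)} (htr : M.trace = 0)
    (hdet : M.det = 0) : assocMatrix (M 0) = M 0 1 • M := by
  rw [trace_fin_two] at htr
  rw [det_fin_two] at hdet
  ext i j
  fin_cases i <;> fin_cases j <;> simp [assocMatrix]
  · ring
  · ring
  · linear_combination -M 0 0 * htr + hdet
  · linear_combination -M 0 1 * htr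

lemma assocMatrix_row_one {M : Matrix (Fin 2) (Fin 2) (ZMod p)} (htr : M.trace = 0)
    (hdet : M.det = 0) : assocMatrix (M 1) = -M 1 0 • M := by
  rw [trace_fin_two] at htr
  rw [det_fin_two] at hdet
  ext i j
  fin_cases i <;> fin_cases j <;> simp [assocMatrix]
  · linear_combination M 1 0 * htr
  · linear_combination M 1 1 * htr - hdet
  · ring

lemma exists_smul_eq_assocMatrix_row {M : Matrix (Fin 2) (Fin 2) (ZMod p)} (htr : M.trace = 0)
    (hdet : M.det = 0) (i : Fin 2) : ∃ c : ZMod p, c • M = assocMatrix (M i) := by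
  fin_cases i
  · exact ⟨_, (assocMatrix_row_zero htr hdet).symm⟩
  · exact ⟨_, (assocMatrix_row_one htr hdet).symm⟩

end CommRing

section Field

open scoped LinearAlgebra.Projectivization

variable {p : ℕ} [Fact p.Prime]

lemma assocMatrix_ne_zero {v : Fin 2 → ZMod p} (hv : v ≠ 0) : assocMatrix v ≠ 0 := by
  rw [assocMatrix_eq_vecMulVec, Ne, vecMulVec_eq_zero, not_or]
  exact ⟨perp_ne_zero hv, hv⟩

lemma exists_smul_eq_of_smul_assocMatrix_eq {v w : Fin 2 → ZMod p} (hv : v ≠ 0) {c : ZMod p}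
    (h : c • assocMatrix w = assocMatrix v) : ∃ a : ZMod p, a • w = v := by
  obtain ⟨i, hi⟩ := Function.ne_iff.mp (perp_ne_zero hv)
  have hrow : c • perp w i • w = perp v i • v := by
    simpa [assocMatrix_eq_vecMulVec, funext_iff, vecMulVec_apply, mul_left_comm c]
      using congrFun h i
  refine ⟨(perp v i)⁻¹ * c * perp w i, ?_⟩
  rw [mul_assoc, mul_smul, mul_smul, hrow, smul_smul, inv_mul_cancel₀ hi, one_smul]

def assocMap : ℙ (ZMod p) (Fin 2 → ZMod p) → ℙ (ZMod p) (Matrix (Fin 2) (Fin 2) (ZMod p)) :=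
  Projectivization.lift (fun v => mk (ZMod p) (assocMatrix v.1) (assocMatrix_ne_zero v.2))
    fun v w t h => (mk_eq_mk_iff' _ _ _ _ _).mpr ⟨t ^ 2, by rw [h, assocMatrix_smul]⟩

lemma assocMap_mk (v : Fin 2 → ZMod p) (hv : v ≠ 0) :
    assocMap (mk (ZMod p) v hv) = mk (ZMod p) (assocMatrix v) (assocMatrix_ne_zero hv) :=
  rfl

lemma assocMap_injective : Function.Injective (assocMap (p := p)) := by
  intro P Q h
  induction P using Projectivization.ind with | h v hv =>
  induction Q using Projectivization.ind with | h w hw =>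
  rw [assocMap_mk, assocMap_mk, mk_eq_mk_iff'] at h
  obtain ⟨c, hc⟩ := h
  exact (mk_eq_mk_iff' _ _ _ hv hw).mpr (exists_smul_eq_of_smul_assocMatrix_eq hv hc)

lemma range_assocMap :
    Set.range (assocMap (p := p)) = {Q | Q.rep.trace = 0 ∧ Q.rep.det = 0} := by
  ext Q
  constructor
  · rintro ⟨P, rfl⟩
    induction P using Projectivization.ind with | h v hv =>
    obtain ⟨a, ha⟩ := exists_smul_eq_mk_rep (ZMod p) (assocMatrix v) (assocMatrix_ne_zero hv)
    rw [Set.mem_ofPred_eq, assocMap_mk, ← ha, Units.smul_def, trace_smul, det_smul,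
      trace_assocMatrix, det_assocMatrix]
    exact ⟨smul_zero _, mul_zero _⟩
  · rintro ⟨htr, hdet⟩
    obtain ⟨i, hi⟩ := Function.ne_iff.mp Q.rep_nonzero
    obtain ⟨c, hc⟩ := exists_smul_eq_assocMatrix_row htr hdet i
    refine ⟨mk (ZMod p) (Q.rep i) hi, ?_⟩
    calc assocMap (mk (ZMod p) (Q.rep i) hi)
        = mk (ZMod p) Q.rep Q.rep_nonzero := (mk_eq_mk_iff' _ _ _ _ _).mpr ⟨c, hc⟩
      _ = Q := mk_rep Q

lemma assocMap_mk_vecMul (A : GL (Fin 2) (ZMod p)) {v : Fin 2 → ZMod p}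
    (hv : v ᵥ* (A : Matrix (Fin 2) (Fin 2) (ZMod p)) ≠ 0)
    (hM : (↑A⁻¹ : Matrix (Fin 2) (Fin 2) (ZMod p)) * assocMatrix v * (A : Matrix _ _ _) ≠ 0) :
    assocMap (mk (ZMod p) (v ᵥ* ↑A) hv) =
      mk (ZMod p) ((↑A⁻¹ : Matrix _ _ _) * assocMatrix v * (A : Matrix _ _ _)) hM := by
  rw [assocMap_mk, mk_eq_mk_iff']
  refine ⟨(A : Matrix (Fin 2) (Fin 2) (ZMod p)).det, ?_⟩
  rw [assocMatrix_vecMul, adjugate_eq_det_smul_inv _ (isUnits_det_units A), coe_units_inv,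
    smul_mul_assoc, smul_mul_assoc]

end Field

theorem metacommutation_equivariant_iso_general (p : ℕ) [Fact p.Prime] :
    ∃ f : Projectivization (ZMod p) (Fin 2 → ZMod p) →
          Projectivization (ZMod p) (Matrix (Fin 2) (Fin 2) (ZMod p)),
      Function.Injective f ∧
      Set.range f = {Q : Projectivization (ZMod p) (Matrix (Fin 2) (Fin 2) (ZMod p)) |
        Q.rep.trace = 0 ∧ Q.rep.det = 0} ∧
      (∀ (v : Fin 2 → ZMod p) (hv : v ≠ 0) (hM : assocMatrix v ≠ 0),
        f (Projectivization.mk (ZMod p) v hv) =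
          Projectivization.mk (ZMod p) (assocMatrix v) hM) ∧
      (∀ (A : GL (Fin 2) (ZMod p)) (v : Fin 2 → ZMod p) (hv : v ≠ 0)
        (hv' : Matrix.vecMul v (↑A : Matrix (Fin 2) (Fin 2) (ZMod p)) ≠ 0)
        (hM : (↑(A⁻¹) : Matrix (Fin 2) (Fin 2) (ZMod p)) * assocMatrix v * (↑A : Matrix (Fin 2) (Fin 2) (ZMod p)) ≠ 0),
        f (Projectivization.mk (ZMod p) (Matrix.vecMul v ↑A) hv') =
          Projectivization.mk (ZMod p)
            ((↑(A⁻¹) : Matrix (Fin 2) (Fin 2) (ZMod p)) * assocMatrix v * (↑A : Matrix (Fin 2) (Fin 2) (ZMod p))) hM) :=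
  ⟨assocMap, assocMap_injective, range_assocMap, fun v hv _ => assocMap_mk v hv,
    fun A _ _ hv' hM => assocMap_mk_vecMul A hv' hM⟩

/-- The conjugation action of `GL₂(𝔽_p)` on the set `D` of nonzero trace-zero
determinant-zero `2×2` matrices modulo scalars is equivariantly isomorphic to the
right action of `GL₂(𝔽_p)` on `ℙ¹(𝔽_p)` by row-vector multiplication, via
`⟨x,y⟩ ↦ [[xy, y²],[−x², −xy]]`. -/
theorem metacommutation_equivariant_iso (p : ℕ) [Fact p.Prime] (hp : Odd p) :
    ∃ f : Projectivization (ZMod p) (Fin 2 → ZMod p) →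
          Projectivization (ZMod p) (Matrix (Fin 2) (Fin 2) (ZMod p)),
      Function.Injective f ∧
      Set.range f = {Q : Projectivization (ZMod p) (Matrix (Fin 2) (Fin 2) (ZMod p)) |
        Q.rep.trace = 0 ∧ Q.rep.det = 0} ∧
      (∀ (v : Fin 2 → ZMod p) (hv : v ≠ 0) (hM : assocMatrix v ≠ 0),
        f (Projectivization.mk (ZMod p) v hv) =
          Projectivization.mk (ZMod p) (assocMatrix v) hM) ∧
      (∀ (A : GL (Fin 2) (ZMod p)) (v : Fin 2 → ZMod p) (hv : v ≠ 0)
        (hv' : Matrix.vecMul v (↑A : Matrix (Fin 2) (Fin 2) (ZMod p)) ≠ 0)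
        (hM : (↑(A⁻¹) : Matrix (Fin 2) (Fin 2) (ZMod p)) * assocMatrix v * (↑A : Matrix (Fin 2) (Fin 2) (ZMod p)) ≠ 0),
        f (Projectivization.mk (ZMod p) (Matrix.vecMul v ↑A) hv') =
          Projectivization.mk (ZMod p)
            ((↑(A⁻¹) : Matrix (Fin 2) (Fin 2) (ZMod p)) * assocMatrix v * (↑A : Matrix (Fin 2) (Fin 2) (ZMod p))) hM) :=
  metacommutation_equivariant_iso_general p
end

section
/- For p an odd prime and A ∈ GL₂(𝔽_p), the sign of the permutation of ℙ¹(𝔽_p) induced by the standard action of A equals the Legendre symbol (det A / p), i.e., it is +1 if det A is a square in 𝔽_p^× and −1 otherwise. -/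
/-!
The sign of the action on `ℙ¹` is a character of `GL₂(𝔽)`, and every invertible matrix is a
product of transvections and diagonal matrices. A transvection has odd order `char 𝔽`, so its
sign is `1`. A diagonal matrix `diag(a, b)` fixes `∞` and acts on the affine line by
`x ↦ (a / b) x`, so its sign is that of multiplication by `a / b` on `𝔽ˣ`. Multiplication by a
generator of the cyclic group `𝔽ˣ` is a cycle of even length `|𝔽| - 1`, hence odd, and a
generator is a non-square; so this sign is the quadratic character of `a / b`, which equals that
of `ab = det`.
-/

open Matrix Equiv Equiv.Perm
open scoped LinearAlgebra.Projectivization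

theorem Matrix.transvection_pow {n R : Type*} [Fintype n] [DecidableEq n] [CommRing R] {i j : n}
    (hij : i ≠ j) (c : R) (k : ℕ) : transvection i j c ^ k = transvection i j (k * c) := by
  induction k with
  | zero => simp
  | succ k ih =>
    rw [pow_succ, ih, transvection_mul_transvection_same _ _ hij]
    push_cast
    ring_nf

theorem Matrix.TransvectionStruct.toMatrix_pow_ringChar {n R : Type*} [Fintype n] [DecidableEq n]
    [CommRing R] (t : TransvectionStruct n R) : t.toMatrix ^ ringChar R = 1 := by
  rw [toMatrix, transvection_pow t.hij, ringChar.Nat.cast_ringChar, zero_mul, transvection_zero]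

theorem Int.units_eq_one_of_pow_eq_one_of_odd {u : ℤˣ} {n : ℕ} (hn : Odd n) (h : u ^ n = 1) :
    u = 1 := by
  rwa [Int.units_pow_eq_pow_mod_two, Nat.odd_iff.mp hn, pow_one] at h

section GroupWithZero

variable {G₀ : Type*} [GroupWithZero G₀]

theorem isCycle_toPerm_of_forall_mem_zpowers {g : G₀ˣ} (hg : ∀ x, x ∈ Subgroup.zpowers g)
    (hg1 : g ≠ 1) : (MulAction.toPerm g : Perm G₀).IsCycle := by
  refine ⟨1, fun h => hg1 (Units.val_eq_one.mp (by simpa [Units.smul_def] using h)),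
    fun y hy => ?_⟩
  have hy0 : y ≠ 0 := by rintro rfl; simp at hy
  obtain ⟨k, hk⟩ := hg (Units.mk0 y hy0)
  refine ⟨k, ?_⟩
  rw [← MulAction.toPermHom_apply, ← map_zpow]
  simp [hk]

theorem support_toPerm_units [Fintype G₀] [DecidableEq G₀] {c : G₀ˣ} (hc : c ≠ 1) :
    (MulAction.toPerm c : Perm G₀).support = Finset.univ.erase 0 := by
  have hc' : (c : G₀) ≠ 1 := by simpa [Units.val_eq_one] using hc
  ext x
  simp only [mem_support, MulAction.toPerm_apply, Units.smul_def, smul_eq_mul, Finset.mem_erase,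
    Finset.mem_univ, and_true]
  constructor
  · rintro h rfl
    simp at h
  · intro hx h
    exact hc' (mul_right_cancel₀ hx (h.trans (one_mul x).symm))

end GroupWithZero

section FiniteField

variable {F : Type*} [Field F] [Fintype F] [DecidableEq F]

theorem sign_toPerm_units (hF : ringChar F ≠ 2) (c : Fˣ) :
    (sign (MulAction.toPerm c : Perm F) : ℤ) = quadraticChar F c := by
  obtain ⟨g, hg⟩ := IsCyclic.exists_generator (α := Fˣ)
  have hpow : ∀ x : Fˣ, ∃ k : ℕ, g ^ k = x := fun x =>
    (isOfFinOrder_of_finite g).mem_powers_iff_mem_zpowers.mpr (hg x)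
  have hg_nonsquare : ¬IsSquare (g : F) := by
    obtain ⟨a, ha⟩ := FiniteField.exists_nonsquare hF
    have ha0 : a ≠ 0 := by rintro rfl; exact ha ⟨0, by simp⟩
    rintro ⟨h, hh⟩
    obtain ⟨k, hk⟩ := hpow (Units.mk0 a ha0)
    exact ha ⟨h ^ k, by
      rw [← Units.val_mk0 ha0, ← hk, Units.val_pow_eq_pow_val, hh, mul_pow]⟩
  have hg1 : g ≠ 1 := by rintro rfl; exact hg_nonsquare ⟨1, by simp⟩
  have hsign : sign (MulAction.toPerm g : Perm F) = -1 := by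
    have hcard : Even (Fintype.card F - 1) :=
      Nat.Odd.sub_odd (Nat.odd_iff.mpr (FiniteField.odd_card_of_char_ne_two hF)) odd_one
    rw [(isCycle_toPerm_of_forall_mem_zpowers hg hg1).sign, support_toPerm_units hg1,
      Finset.card_erase_of_mem (Finset.mem_univ _), Finset.card_univ, hcard.neg_one_pow]
  obtain ⟨k, rfl⟩ := hpow c
  rw [← MulAction.toPermHom_apply, map_pow, map_pow, Units.val_pow_eq_pow_val,
    Units.val_pow_eq_pow_val, map_pow, MulAction.toPermHom_apply, hsign,
    quadraticChar_neg_one_iff_not_isSquare.mpr hg_nonsquare, Units.val_neg, Units.val_one]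

variable (F) in
/-- `OnePoint.equivProjectivization`, with `OnePoint F` unfolded to `Option F` so that
`Equiv.optionCongr` and its sign apply. -/
def optionEquivProjectivization : Option F ≃ ℙ F (Fin 2 → F) :=
  OnePoint.equivProjectivization F

omit [Fintype F] in
@[simp]
theorem optionEquivProjectivization_none :
    optionEquivProjectivization F none = .mk F ![1, 0] (by simp) := rfl

omit [Fintype F] in
@[simp]
theorem optionEquivProjectivization_some (t : F) :
    optionEquivProjectivization F (some t) = .mk F ![t, 1] (by simp) := rfl

omit [Fintype F] in
theorem toPerm_eq_permCongr_optionCongr_of_diagonal {g : GL (Fin 2) F} {D : Fin 2 → F}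
    (hg : (g : Matrix (Fin 2) (Fin 2) F) = diagonal D) (h0 : D 0 ≠ 0) (h1 : D 1 ≠ 0) :
    MulAction.toPerm g = (optionEquivProjectivization F).permCongr
      (optionCongr (MulAction.toPerm (Units.mk0 (D 0 / D 1) (div_ne_zero h0 h1)))) := by
  refine Equiv.ext fun x => ?_
  obtain ⟨y, rfl⟩ := (optionEquivProjectivization F).surjective x
  have hg' : ∀ i j, g i j = diagonal D i j := fun i j => by rw [← hg]
  rw [permCongr_apply, symm_apply_apply]
  cases y with
  | none => simp [hg', Projectivization.mk_eq_mk_iff']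
  | some x =>
    simp [hg', Projectivization.mk_eq_mk_iff']
    field_simp

variable [Fintype (ℙ F (Fin 2 → F))] [DecidableEq (ℙ F (Fin 2 → F))]

theorem sign_toPerm_of_diagonal (hF : ringChar F ≠ 2) {g : GL (Fin 2) F} {D : Fin 2 → F}
    (hg : (g : Matrix (Fin 2) (Fin 2) F) = diagonal D) :
    (sign (MulAction.toPerm g : Perm (ℙ F (Fin 2 → F))) : ℤ) =
      quadraticChar F (diagonal D).det := by
  have hdet : (diagonal D).det = D 0 * D 1 := by rw [det_diagonal, Fin.prod_univ_two]
  have hD : D 0 * D 1 ≠ 0 := hdet ▸ hg ▸ g.det_ne_zero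
  have h0 : D 0 ≠ 0 := left_ne_zero_of_mul hD
  have h1 : D 1 ≠ 0 := right_ne_zero_of_mul hD
  rw [toPerm_eq_permCongr_optionCongr_of_diagonal hg h0 h1, sign_permCongr, optionCongr_sign,
    sign_toPerm_units hF, Units.val_mk0, hdet]
  calc quadraticChar F (D 0 / D 1)
      = quadraticChar F (D 0 / D 1) * quadraticChar F (D 1 ^ 2) := by
        rw [quadraticChar_sq_one' h1, mul_one]
    _ = quadraticChar F (D 0 * D 1) := by
        rw [← map_mul]
        congr 1
        field_simp

omit [DecidableEq F] in
theorem sign_toPerm_of_transvection (hF : ringChar F ≠ 2) {g : GL (Fin 2) F}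
    (t : TransvectionStruct (Fin 2) F) (hg : (g : Matrix (Fin 2) (Fin 2) F) = t.toMatrix) :
    sign (MulAction.toPerm g : Perm (ℙ F (Fin 2 → F))) = 1 := by
  have hodd : Odd (ringChar F) := (CharP.char_is_prime F (ringChar F)).odd_of_ne_two hF
  refine Int.units_eq_one_of_pow_eq_one_of_odd hodd ?_
  have hpow : g ^ ringChar F = 1 := Units.ext (by
    rw [Units.val_pow_eq_pow_val, hg, t.toMatrix_pow_ringChar, Units.val_one])
  rw [← MulAction.toPermHom_apply, ← map_pow, ← map_pow, hpow, map_one, map_one]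

theorem sign_toPerm_projectivization (hF : ringChar F ≠ 2) (g : GL (Fin 2) F) :
    (sign (MulAction.toPerm g : Perm (ℙ F (Fin 2 → F))) : ℤ) =
      quadraticChar F (g : Matrix (Fin 2) (Fin 2) F).det := by
  refine diagonal_transvection_induction_of_det_ne_zero
    (fun M => ∀ g : GL (Fin 2) F, (g : Matrix (Fin 2) (Fin 2) F) = M →
      (sign (MulAction.toPerm g : Perm (ℙ F (Fin 2 → F))) : ℤ) = quadraticChar F M.det)
    _ g.det_ne_zero (fun D _ g hg => sign_toPerm_of_diagonal hF hg) (fun t g hg => ?_)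
    (fun A B hA hB ihA ihB g hg => ?_) g rfl
  · rw [sign_toPerm_of_transvection hF t hg, t.det, map_one, Units.val_one]
  · set a := GeneralLinearGroup.mkOfDetNeZero A hA
    set b := GeneralLinearGroup.mkOfDetNeZero B hB
    have hab : g = a * b := Units.ext hg
    rw [hab, ← MulAction.toPermHom_apply, map_mul, map_mul, MulAction.toPermHom_apply,
      MulAction.toPermHom_apply, Units.val_mul, ihA a rfl, ihB b rfl, det_mul, map_mul]

end FiniteField

/-- The sign of the permutation of `ℙ¹(𝔽_p)` induced by `A ∈ GL₂(𝔽_p)` is the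
quadratic character of `det A`. -/
theorem sign_eq_legendre (p : ℕ) [Fact p.Prime] (hp : Odd p)
    (A : GL (Fin 2) (ZMod p))
    (σ : Equiv.Perm (Projectivization (ZMod p) (Fin 2 → ZMod p)))
    (hσ : ∀ (v : Fin 2 → ZMod p) (hv : v ≠ 0)
      (hv' : Matrix.vecMul v (↑A : Matrix (Fin 2) (Fin 2) (ZMod p)) ≠ 0),
      σ (Projectivization.mk (ZMod p) v hv) =
        Projectivization.mk (ZMod p) (Matrix.vecMul v ↑A) hv') :
    letI : Finite (Projectivization (ZMod p) (Fin 2 → ZMod p)) := Quotient.finite _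
    letI := Classical.decEq (Projectivization (ZMod p) (Fin 2 → ZMod p))
    letI : Fintype (Projectivization (ZMod p) (Fin 2 → ZMod p)) := Fintype.ofFinite _
    Equiv.Perm.sign σ =
      if IsSquare ((↑A : Matrix (Fin 2) (Fin 2) (ZMod p)).det) then 1 else -1 := by
  let : Finite (Projectivization (ZMod p) (Fin 2 → ZMod p)) := Quotient.finite _
  let := Classical.decEq (Projectivization (ZMod p) (Fin 2 → ZMod p))
  let : Fintype (Projectivization (ZMod p) (Fin 2 → ZMod p)) := Fintype.ofFinite _
  have hchar : ringChar (ZMod p) ≠ 2 := by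
    rw [ZMod.ringChar_zmod_n]
    rintro rfl
    exact Nat.not_odd_iff_even.mpr even_two hp
  set B := GeneralLinearGroup.mkOfDetNeZero (A : Matrix (Fin 2) (Fin 2) (ZMod p))ᵀ
    (by rw [det_transpose]; exact A.det_ne_zero)
  have hσB : σ = MulAction.toPerm B := Equiv.ext fun x => by
    induction x using Projectivization.ind with
    | h v hv =>
      have hBv : B • v = v ᵥ* A := mulVec_transpose _ _
      rw [hσ v hv (hBv ▸ (smul_ne_zero_iff_ne B).mpr hv), MulAction.toPerm_apply,
        Projectivization.smul_mk]
      simp only [hBv]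
  have hsign := sign_toPerm_projectivization hchar B
  have hdet : (B : Matrix (Fin 2) (Fin 2) (ZMod p)).det =
      (A : Matrix (Fin 2) (Fin 2) (ZMod p)).det :=
    det_transpose _
  rw [← hσB, hdet] at hsign
  refine Units.val_injective ?_
  split_ifs with hsq
  · rw [hsign, (quadraticChar_one_iff_isSquare A.det_ne_zero).mpr hsq, Units.val_one]
  · rw [hsign, quadraticChar_neg_one_iff_not_isSquare.mpr hsq, Units.val_neg, Units.val_one]
end

section
/- If A ∈ GL₂(𝔽_p) (p an odd prime) induces a permutation of ℙ¹(𝔽_p) for which some point has order exactly 2 in its cycle, then the induced permutation itself has order 2, i.e., A² acts as the identity on ℙ¹(𝔽_p). -/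
/-!
If `A` maps the line `⟨v⟩` to `⟨w⟩ ≠ ⟨v⟩` and back, then `v, w = vA` is a basis of `𝔽_p²` and
`vA² = c v`. Since `A²` commutes with `A`, also `wA² = c w`, so `A²` is the scalar `c` and fixes
every line.
-/

open Matrix
open scoped LinearAlgebra.Projectivization

namespace LinearMap

variable {K V : Type*} [Field K] [AddCommGroup V] [Module K V]

theorem comp_self_eq_smul_id_of_finrank_eq_two (h2 : Module.finrank K V = 2) (f : V →ₗ[K] V)
    {v : V} {c : K} (hli : LinearIndependent K ![v, f v]) (hc : f (f v) = c • v) :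
    f ∘ₗ f = c • LinearMap.id := by
  have : FiniteDimensional K V := Module.finite_of_finrank_eq_succ h2
  let b := basisOfLinearIndependentOfCardEqFinrank hli (by simp [h2])
  refine b.ext fun i => ?_
  fin_cases i
  · simpa [b] using hc
  · simp [b, hc]

end LinearMap

namespace Projectivization

variable {K V : Type*} [Field K] [AddCommGroup V] [Module K V]

theorem eq_map_of_forall_mk (f : V →ₗ[K] V) (hf : Function.Injective f) (σ : ℙ K V → ℙ K V)
    (hσ : ∀ (v : V) (hv : v ≠ 0) (hfv : f v ≠ 0), σ (mk K v hv) = mk K (f v) hfv) :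
    σ = map f hf := by
  ext1 y
  induction y using ind with
  | h v hv => exact (hσ v hv _).trans (map_mk f hf v hv).symm

theorem involutive_map_of_finrank_eq_two (h2 : Module.finrank K V = 2) (f : V →ₗ[K] V)
    (hf : Function.Injective f) {x : ℙ K V} (hx2 : map f hf (map f hf x) = x)
    (hx1 : map f hf x ≠ x) : Function.Involutive (map f hf) := by
  induction x using ind with
  | h v hv =>
  have hfv : f v ≠ 0 := map_zero f ▸ hf.ne hv
  have hffv : f (f v) ≠ 0 := map_zero f ▸ hf.ne hfv
  simp only [map_mk] at hx2 hx1
  obtain ⟨c, hc⟩ := (mk_eq_mk_iff' K _ _ hffv hv).1 hx2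
  have hli : LinearIndependent K ![v, f v] := by
    rw [← independent_mk_iff_LinearIndependent hv hfv, independent_pair_iff_ne]
    exact hx1.symm
  have hsq := LinearMap.comp_self_eq_smul_id_of_finrank_eq_two h2 f hli hc.symm
  intro y
  induction y using ind with
  | h u hu =>
  simp only [map_mk, mk_eq_mk_iff']
  exact ⟨c, (LinearMap.congr_fun hsq u).symm⟩

end Projectivization

theorem order_two_of_cycle_two_general (p : ℕ) [Fact p.Prime]
    (A : GL (Fin 2) (ZMod p))
    (σ : Equiv.Perm (Projectivization (ZMod p) (Fin 2 → ZMod p)))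
    (hσ : ∀ (v : Fin 2 → ZMod p) (hv : v ≠ 0)
      (hv' : Matrix.vecMul v (↑A : Matrix (Fin 2) (Fin 2) (ZMod p)) ≠ 0),
      σ (Projectivization.mk (ZMod p) v hv) =
        Projectivization.mk (ZMod p) (Matrix.vecMul v ↑A) hv')
    (x : Projectivization (ZMod p) (Fin 2 → ZMod p))
    (hx2 : σ (σ x) = x) (hx1 : σ x ≠ x) :
    ∀ y : Projectivization (ZMod p) (Fin 2 → ZMod p), σ (σ y) = y := by
  have hf : Function.Injective (vecMulLinear (A : Matrix (Fin 2) (Fin 2) (ZMod p))) :=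
    vecMul_injective_of_isUnit A.isUnit
  have hσf := Projectivization.eq_map_of_forall_mk _ hf σ hσ
  rw [hσf] at hx2 hx1 ⊢
  exact Projectivization.involutive_map_of_finrank_eq_two (by simp) _ hf hx2 hx1

/-- If some point of `ℙ¹(𝔽_p)` has order exactly `2` in its cycle under the
permutation induced by `A ∈ GL₂(𝔽_p)`, then the permutation has order `2`. -/
theorem order_two_of_cycle_two (p : ℕ) [Fact p.Prime] (hp : Odd p)
    (A : GL (Fin 2) (ZMod p))
    (σ : Equiv.Perm (Projectivization (ZMod p) (Fin 2 → ZMod p)))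
    (hσ : ∀ (v : Fin 2 → ZMod p) (hv : v ≠ 0)
      (hv' : Matrix.vecMul v (↑A : Matrix (Fin 2) (Fin 2) (ZMod p)) ≠ 0),
      σ (Projectivization.mk (ZMod p) v hv) =
        Projectivization.mk (ZMod p) (Matrix.vecMul v ↑A) hv')
    (x : Projectivization (ZMod p) (Fin 2 → ZMod p))
    (hx2 : σ (σ x) = x) (hx1 : σ x ≠ x) :
    ∀ y : Projectivization (ZMod p) (Fin 2 → ZMod p), σ (σ y) = y :=
  order_two_of_cycle_two_general p A σ hσ x hx2 hx1
end

section
/- For p an odd prime and A ∈ GL₂(𝔽_p), all cycles of length greater than 1 of the permutation of ℙ¹(𝔽_p) induced by A have the same length. -/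
open Matrix

/-!
If `g` moves a point `x = [v]` of a projective line and `h` commutes with `g` and fixes `x`,
then `v` and `g • v` form a basis of eigenvectors of `h` with the same eigenvalue, so `h` is a
scalar and acts trivially. Applied to `h = g ^ n` with `n` the period of a moved point, this shows
that the period of any moved point divides that of any other.
-/

open Module MulAction
open scoped LinearAlgebra.Projectivization

namespace Projectivization

variable {K V G : Type*} [Field K] [AddCommGroup V] [Module K V]
  [Group G] [DistribMulAction G V] [SMulCommClass G K V]

theorem smul_eq_self_of_commute (hV : finrank K V = 2) {g h : G} (hgh : Commute g h)
    {x : ℙ K V} (hgx : g • x ≠ x) (hhx : h • x = x) (y : ℙ K V) : h • y = y := by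
  induction x using ind with | h v hv => ?_
  obtain ⟨c, hc⟩ : ∃ c : K, c • v = h • v := (mk_eq_mk_iff' ..).1 hhx
  have hli : LinearIndependent K ![v, g • v] :=
    (LinearIndependent.pair_iff' hv).2 fun a ha => hgx <| (mk_eq_mk_iff' ..).2 ⟨a, ha⟩
  have hscalar : DistribSMul.toLinearMap K V h = c • LinearMap.id := by
    refine LinearMap.ext_on_range (hli.span_eq_top_of_card_eq_finrank (by simp [hV])) fun i => ?_
    fin_cases i
    · change h • v = c • v
      exact hc.symm
    · change h • g • v = c • g • v
      rw [← mul_smul, ← hgh.eq, mul_smul, ← hc, smul_comm]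
  induction y using ind with | h w hw => ?_
  exact (mk_eq_mk_iff' ..).2 ⟨c, (LinearMap.congr_fun hscalar w).symm⟩

theorem period_dvd_period_of_smul_ne (hV : finrank K V = 2) {g : G} {y : ℙ K V}
    (hy : g • y ≠ y) (x : ℙ K V) : period g x ∣ period g y :=
  pow_smul_eq_iff_period_dvd.1 <|
    smul_eq_self_of_commute hV (Commute.self_pow g _) hy (pow_period_smul g y) x

theorem period_eq_period_of_smul_ne (hV : finrank K V = 2) {g : G} {x y : ℙ K V}
    (hx : g • x ≠ x) (hy : g • y ≠ y) : period g x = period g y :=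
  Nat.dvd_antisymm (period_dvd_period_of_smul_ne hV hy x) (period_dvd_period_of_smul_ne hV hx y)

end Projectivization

theorem cycles_same_length_general (p : ℕ) [Fact p.Prime]
    (A : GL (Fin 2) (ZMod p))
    (σ : Equiv.Perm (Projectivization (ZMod p) (Fin 2 → ZMod p)))
    (hσ : ∀ (v : Fin 2 → ZMod p) (hv : v ≠ 0)
      (hv' : Matrix.vecMul v (↑A : Matrix (Fin 2) (Fin 2) (ZMod p)) ≠ 0),
      σ (Projectivization.mk (ZMod p) v hv) =
        Projectivization.mk (ZMod p) (Matrix.vecMul v ↑A) hv')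
    (x y : Projectivization (ZMod p) (Fin 2 → ZMod p))
    (hx : σ x ≠ x) (hy : σ y ≠ y) :
    Function.minimalPeriod σ x = Function.minimalPeriod σ y := by
  let e := toLinearEquivRight'OfInv A.inv_mul A.mul_inv
  have hσe : ⇑σ = (e • ·) := funext fun z => by
    induction z using Projectivization.ind with | h v hv => exact hσ v hv _
  rw [hσe] at hx hy ⊢
  exact Projectivization.period_eq_period_of_smul_ne (by simp) hx hy

/-- All cycles of length greater than `1` of the permutation of `ℙ¹(𝔽_p)`
induced by `A ∈ GL₂(𝔽_p)` have the same length. -/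
theorem cycles_same_length (p : ℕ) [Fact p.Prime] (hp : Odd p)
    (A : GL (Fin 2) (ZMod p))
    (σ : Equiv.Perm (Projectivization (ZMod p) (Fin 2 → ZMod p)))
    (hσ : ∀ (v : Fin 2 → ZMod p) (hv : v ≠ 0)
      (hv' : Matrix.vecMul v (↑A : Matrix (Fin 2) (Fin 2) (ZMod p)) ≠ 0),
      σ (Projectivization.mk (ZMod p) v hv) =
        Projectivization.mk (ZMod p) (Matrix.vecMul v ↑A) hv')
    (x y : Projectivization (ZMod p) (Fin 2 → ZMod p))
    (hx : σ x ≠ x) (hy : σ y ≠ y) :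
    Function.minimalPeriod σ x = Function.minimalPeriod σ y :=
  cycles_same_length_general p A σ hσ x y hx hy
end
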